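/- If X', X'' are subobjects of X of maximal slope (i.e., nonzero with μ(X'') ≤ μ(X') for all nonzero subobjects), then X'+X'' is of maximal slope, and X' ∩ X'' is of maximal slope if nonzero. Consequently, if X admits any subobject of maximal slope, it admits a unique final (largest) such subobject. -/

import Mathlib

open CategoryTheory Limits

universe v u v' u'

variable (C : Type u) [Category.{v} C] [Preadditive C] [HasZeroObject C]
  [HasBinaryBiproducts C]
variable (D : Type u') [Category.{v'} D] [Abelian D]
variable (F : C ⥤ D) [F.Additive] [F.Faithful]
variable (V : Type*) [AddCommGroup V] [LinearOrder V] [IsOrderedAddMonoid V]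

/-- The data and axioms of abstract Harder–Narasimhan theory:
an exact structure on `C` (given by its class of short strict exact sequences),
an exact faithful functor `F : C ⥤ D` inducing bijections between strict
subobjects and subobjects of the image, a rank function on `D` and a degree
function on `C`. -/
structure HNTheory where
  /-- `SSE f g` means `0 ⟶ A ⟶ B ⟶ Z ⟶ 0` is a short strict exact sequence. -/
  SSE : ∀ ⦃A B Z : C⦄, (A ⟶ B) → (B ⟶ Z) → Prop
  sse_comp_zero : ∀ ⦃A B Z : C⦄ (f : A ⟶ B) (g : B ⟶ Z), SSE f g → f ≫ g = 0
  sse_mono : ∀ ⦃A B Z : C⦄ (f : A ⟶ B) (g : B ⟶ Z), SSE f g → Mono f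
  sse_epi : ∀ ⦃A B Z : C⦄ (f : A ⟶ B) (g : B ⟶ Z), SSE f g → Epi g
  sse_isKernel : ∀ ⦃A B Z : C⦄ (f : A ⟶ B) (g : B ⟶ Z) (hfg : SSE f g),
    Nonempty (IsLimit (KernelFork.ofι f (sse_comp_zero f g hfg)))
  sse_isCokernel : ∀ ⦃A B Z : C⦄ (f : A ⟶ B) (g : B ⟶ Z) (hfg : SSE f g),
    Nonempty (IsColimit (CokernelCofork.ofπ g (sse_comp_zero f g hfg)))
  /-- `F` is exact. -/
  F_exact : ∀ ⦃A B Z : C⦄ (f : A ⟶ B) (g : B ⟶ Z) (hfg : SSE f g),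
    (ShortComplex.mk (F.map f) (F.map g)
      (by rw [← F.map_comp, sse_comp_zero f g hfg, F.map_zero])).ShortExact
  /-- `F` induces a bijection between strict subobjects of `X` and subobjects
  of `F(X)`. -/
  strict_sub_bij : ∀ X : C,
    Function.Bijective
      (fun S : {S : Subobject X // ∃ (Z : C) (g : X ⟶ Z), SSE S.arrow g} =>
        imageSubobject (F.map S.1.arrow))
  rk : D → ℕ
  rk_iso : ∀ ⦃X Y : D⦄, (X ≅ Y) → rk X = rk Y
  rk_eq_zero_iff : ∀ X : D, rk X = 0 ↔ IsZero X
  rk_additive : ∀ (S : ShortComplex D), S.ShortExact → rk S.X₂ = rk S.X₁ + rk S.X₃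
  deg : C → V
  deg_iso : ∀ ⦃X Y : C⦄, (X ≅ Y) → deg X = deg Y
  deg_additive : ∀ ⦃A B Z : C⦄ (f : A ⟶ B) (g : B ⟶ Z), SSE f g → deg B = deg A + deg Z
  deg_le_of_FIso : ∀ ⦃X Y : C⦄ (f : X ⟶ Y), IsIso (F.map f) → deg X ≤ deg Y
  deg_eq_iff_of_FIso : ∀ ⦃X Y : C⦄ (f : X ⟶ Y), IsIso (F.map f) → (deg X = deg Y ↔ IsIso f)

namespace HNTheory

variable {C D F V}

/-- The subobject `F(X') ⊆ F(X)` associated to a subobject `X' ⊆ X`. -/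
noncomputable def FSub (_h : HNTheory C D F V) {X : C} (S : Subobject X) :
    Subobject (F.obj X) :=
  imageSubobject (F.map S.arrow)

variable (h : HNTheory C D F V)

/-- The rank of an object of `C` is the rank of its image in `D`. -/
def rkC (X : C) : ℕ := h.rk (F.obj X)

/-- A subobject is strict if it is an admissible (strict) monomorphism,
i.e. fits in a short strict exact sequence. -/
def StrictSub {X : C} (S : Subobject X) : Prop :=
  ∃ (Z : C) (g : X ⟶ Z), h.SSE S.arrow g

/-- `μ(X) ≤ μ(Y)`, in cross-multiplied form `rk(Y) • deg(X) ≤ rk(X) • deg(Y)`. -/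
def muLE (X Y : C) : Prop := h.rkC Y • h.deg X ≤ h.rkC X • h.deg Y

/-- `μ(X) < μ(Y)`, in cross-multiplied form. -/
def muLT (X Y : C) : Prop := h.rkC Y • h.deg X < h.rkC X • h.deg Y

/-- `μ(X) = μ(Y)`, in cross-multiplied form. -/
def muEQ (X Y : C) : Prop := h.rkC Y • h.deg X = h.rkC X • h.deg Y

/-- A nonzero object is semistable if every nonzero proper subobject has
slope at most that of the ambient object. -/
def Semistable (X : C) : Prop :=
  ¬ IsZero X ∧ ∀ S : Subobject X, ¬ IsZero ((S : C)) → S ≠ ⊤ → h.muLE (S : C) X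

/-- A subobject of maximal slope. -/
def MaxSlopeSub {X : C} (S : Subobject X) : Prop :=
  ¬ IsZero ((S : C)) ∧ ∀ T : Subobject X, ¬ IsZero ((T : C)) → h.muLE (T : C) (S : C)

/-- `G` is (a model of) the `i`-th graded piece `c i.succ / c i.castSucc` of a
filtration `c` by strict subobjects. -/
def GrAt {X : C} {N : ℕ} (c : Fin (N + 1) → Subobject X) (i : Fin N) (G : C) : Prop :=
  ∃ (hle : c i.castSucc ≤ c i.succ) (p : ((c i.succ : Subobject X) : C) ⟶ G),
    h.SSE (Subobject.ofLE (c i.castSucc) (c i.succ) hle) p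

/-- `c` is a Harder–Narasimhan filtration. -/
def IsHNFilt {X : C} {N : ℕ} (c : Fin (N + 1) → Subobject X) : Prop :=
  StrictMono c ∧ c 0 = ⊥ ∧ c (Fin.last N) = ⊤ ∧ (∀ i, h.StrictSub (c i)) ∧
  (∀ (i : Fin N) (G : C), h.GrAt c i G → h.Semistable G) ∧
  (∀ (i j : Fin N), i < j → ∀ (Gi Gj : C),
    h.GrAt c i Gi → h.GrAt c j Gj → h.muLT Gj Gi)

end HNTheory

/-!
Ranks and images are computed in the abelian category `D` through `F`. If `S, T ≤ U` and
`F S ⊕ F T → F U` is epi, let `Q` be the cokernel of `S → U` and `K → T` the kernel of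
`T → U → Q`, both realised by strict sequences up to an `F`-isomorphism. Since passing to a
strict closure only raises the degree, the subobject `W = K` of `X` satisfies
`rk U + rk W = rk S + rk T` and `deg S + deg T ≤ deg U + deg W`, while
`F W = F S ∩ F T` inside `F U`. A least upper bound of `S` and `T` qualifies as such a `U`,
since it lies below the strict subobject whose image is `F S + F T`.

If `S` and `T` have the maximal slope `μ`, then `μ(W) ≤ μ ≤ μ(T)` forces `μ(U) ≥ μ`, and
`μ(U) ≤ μ` forces `μ(W) ≥ μ`. Subobjects of maximal slope are strict, so `W ≤ S ∩ T`
with the same image under `F`, whence `μ(S ∩ T) ≥ μ(W)`. Finally a subobject of maximal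
slope and maximal rank contains every other one: their span has maximal slope and, by
maximality, the same rank, so the inclusion is an `F`-isomorphism that does not raise the
degree, hence an isomorphism.
-/

namespace HNTheory

set_option linter.unusedSectionVars false

variable {C D F V}

section Abelian

lemma imageSubobject_le_of_comp_eq {A A' B : D} {f : A ⟶ B} {g : A' ⟶ B} (i : A ⟶ A')
    (hf : i ≫ g = f) : imageSubobject f ≤ imageSubobject g := by
  subst hf
  exact imageSubobject_comp_le i g

lemma comp_eq_zero_of_imageSubobject_le {A B B' : D} {f : A ⟶ B} {g : B ⟶ B'}
    (hfg : imageSubobject f ≤ kernelSubobject g) : f ≫ g = 0 := by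
  have hf := imageSubobject_factors_comp_self f (𝟙 _)
  rw [Category.id_comp] at hf
  exact (kernelSubobject_factors_iff g f).1 (Subobject.factors_of_le f hfg hf)

lemma epi_of_imageSubobject_le_imageSubobject_comp {A B B' : D} (u : A ⟶ B) (m : B ⟶ B')
    [Mono m] (hu : imageSubobject m ≤ imageSubobject (u ≫ m)) : Epi u := by
  rw [imageSubobject_mono] at hu
  set ι := Subobject.ofMkLE m _ hu
  have hι : ι ≫ (imageSubobject (u ≫ m)).arrow = m := Subobject.ofMkLE_arrow hu
  have : Mono ι := mono_of_mono_fac hι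
  have hfac : u ≫ ι = factorThruImageSubobject (u ≫ m) := by
    rw [← cancel_mono (imageSubobject (u ≫ m)).arrow, Category.assoc, hι,
      imageSubobject_arrow_comp]
  have : Epi ι := epi_of_epi_fac hfac
  have : IsIso ι := isIso_of_mono_of_epi ι
  have hu' : u = factorThruImageSubobject (u ≫ m) ≫ inv ι := by
    rw [← hfac, Category.assoc, IsIso.hom_inv_id, Category.comp_id]
  rw [hu']
  infer_instance

lemma isIso_of_comp_eq_of_imageSubobject_le {P P' B : D} {m₁ : P ⟶ B} {m₂ : P' ⟶ B}
    [Mono m₁] [Mono m₂] (ψ : P ⟶ P') (hψ : ψ ≫ m₂ = m₁)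
    (hle : imageSubobject m₂ ≤ imageSubobject m₁) : IsIso ψ := by
  have : Mono ψ := mono_of_mono_fac hψ
  have : Epi ψ := epi_of_imageSubobject_le_imageSubobject_comp ψ m₂ (by rwa [hψ])
  exact isIso_of_mono_of_epi ψ

lemma shortExact_cokernel {A B : D} (m : A ⟶ B) [Mono m] :
    (ShortComplex.mk m (cokernel.π m) (cokernel.condition m)).ShortExact :=
  .mk' (ShortComplex.exact_of_g_is_cokernel _ (cokernelIsCokernel m)) ‹_› inferInstance

end Abelian

lemma sub_nsmul_le_add_of_exchange {a b u w : ℕ} {dS dT dU dW : V} (hrk : u + w = a + b)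
    (hdeg : dS + dT ≤ dU + dW) :
    a • dT - b • dS ≤ (a • dU - u • dS) + (a • dW - w • dS) := by
  have hrk' : u • dS + w • dS = a • dS + b • dS := by rw [← add_nsmul, ← add_nsmul, hrk]
  have hdeg' : a • dS + a • dT ≤ a • dU + a • dW := by
    simpa only [smul_add] using nsmul_le_nsmul_right hdeg a
  calc a • dT - b • dS = a • dS + a • dT - (u • dS + w • dS) := by rw [hrk']; abel
    _ ≤ a • dU + a • dW - (u • dS + w • dS) := sub_le_sub_right hdeg' _
    _ = (a • dU - u • dS) + (a • dW - w • dS) := by abel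

lemma isZero_of_isZero_map {A : C} (hA : IsZero (F.obj A)) : IsZero A := by
  rw [IsZero.iff_id_eq_zero] at hA ⊢
  exact F.map_injective (by rw [F.map_id, F.map_zero, hA])

lemma not_isZero_of_le {X : C} {S T : Subobject X} (hS : ¬ IsZero (S : C)) (hST : S ≤ T) :
    ¬ IsZero (T : C) :=
  fun hT => hS (IsZero.of_mono (Subobject.ofLE S T hST) hT)

lemma epi_map_comp_of_epi_map_desc {A B U Q : C} (s : A ⟶ U) (t : B ⟶ U) (q : U ⟶ Q)
    (hsq : s ≫ q = 0) [Epi (F.map (biprod.desc s t))] [Epi (F.map q)] :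
    Epi (F.map (t ≫ q)) := by
  have hdesc : biprod.desc s t ≫ q = (biprod.snd : A ⊞ B ⟶ B) ≫ t ≫ q := by
    ext <;> simp [hsq]
  have : Epi (F.map (biprod.snd : A ⊞ B ⟶ B) ≫ F.map (t ≫ q)) := by
    rw [← F.map_comp, ← hdesc, F.map_comp]
    exact epi_comp _ _
  exact epi_of_epi (F.map (biprod.snd : A ⊞ B ⟶ B)) _

variable (h : HNTheory C D F V)

section Slope

lemma muLE_iff_sub_nonneg (A B : C) :
    h.muLE A B ↔ 0 ≤ h.rkC A • h.deg B - h.rkC B • h.deg A :=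
  sub_nonneg.symm

lemma muLE_sup_of_exchange {S T U W : C} (hrk : h.rkC U + h.rkC W = h.rkC S + h.rkC T)
    (hdeg : h.deg S + h.deg T ≤ h.deg U + h.deg W) (hST : h.muLE S T) (hWS : h.muLE W S) :
    h.muLE S U := by
  rw [muLE_iff_sub_nonneg] at hST ⊢
  have hWS : h.rkC S • h.deg W - h.rkC W • h.deg S ≤ 0 := sub_nonpos.2 hWS
  have := sub_nsmul_le_add_of_exchange hrk hdeg
  grind

lemma muLE_inf_of_exchange {S T U W : C} (hrk : h.rkC U + h.rkC W = h.rkC S + h.rkC T)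
    (hdeg : h.deg S + h.deg T ≤ h.deg U + h.deg W) (hST : h.muLE S T) (hUS : h.muLE U S) :
    h.muLE S W := by
  rw [muLE_iff_sub_nonneg] at hST ⊢
  have hUS : h.rkC S • h.deg U - h.rkC U • h.deg S ≤ 0 := sub_nonpos.2 hUS
  have := sub_nsmul_le_add_of_exchange hrk hdeg
  grind

lemma muLE_trans {A B E : C} (hB : 0 < h.rkC B) (hAB : h.muLE A B) (hBE : h.muLE B E) :
    h.muLE A E := by
  unfold muLE at *
  refine le_of_nsmul_le_nsmul_right hB.ne' ?_
  calc h.rkC B • h.rkC E • h.deg A = h.rkC E • h.rkC B • h.deg A := smul_comm _ _ _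
    _ ≤ h.rkC E • h.rkC A • h.deg B := nsmul_le_nsmul_right hAB _
    _ = h.rkC A • h.rkC E • h.deg B := smul_comm _ _ _
    _ ≤ h.rkC A • h.rkC B • h.deg E := nsmul_le_nsmul_right hBE _
    _ = h.rkC B • h.rkC A • h.deg E := smul_comm _ _ _

lemma deg_le_of_muLE_of_rkC_eq {A B : C} (hA : 0 < h.rkC A) (hrk : h.rkC B = h.rkC A)
    (hBA : h.muLE B A) : h.deg B ≤ h.deg A := by
  unfold muLE at hBA
  rw [hrk] at hBA
  exact le_of_nsmul_le_nsmul_right hA.ne' hBA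

end Slope

section Basic

lemma exists_strictSub_FSub_eq {Y : C} (K : Subobject (F.obj Y)) :
    ∃ A : Subobject Y, h.StrictSub A ∧ h.FSub A = K :=
  let ⟨⟨A, hA⟩, hK⟩ := (h.strict_sub_bij Y).2 K
  ⟨A, hA, hK⟩

lemma rkC_pos {A : C} (hA : ¬ IsZero A) : 0 < h.rkC A :=
  Nat.pos_of_ne_zero fun h0 => hA (isZero_of_isZero_map ((h.rk_eq_zero_iff _).1 h0))

lemma rkC_eq_zero_of_isZero {A : C} (hA : IsZero A) : h.rkC A = 0 :=
  (h.rk_eq_zero_iff _).2 (F.map_isZero hA)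

-- Any strict subobject of `A` gives a short strict exact sequence of zero objects.
lemma deg_eq_zero_of_isZero {A : C} (hA : IsZero A) : h.deg A = 0 := by
  obtain ⟨A₀, ⟨Z, g, hA₀⟩, -⟩ := h.exists_strictSub_FSub_eq (⊥ : Subobject (F.obj A))
  have hZ : IsZero Z := by
    have := h.sse_epi _ _ hA₀
    exact IsZero.of_epi g hA
  have hadd := h.deg_additive _ _ hA₀
  rw [h.deg_iso ((IsZero.of_mono_eq_zero A₀.arrow (hA.eq_zero_of_tgt _)).iso hA),
    h.deg_iso (hZ.iso hA)] at hadd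
  simpa using hadd

lemma muLE_of_isZero {A : C} (B : C) (hA : IsZero A) : h.muLE A B := by
  simp [muLE, h.rkC_eq_zero_of_isZero hA, h.deg_eq_zero_of_isZero hA]

lemma rk_le_of_mono {A B : D} (m : A ⟶ B) [Mono m] : h.rk A ≤ h.rk B := by
  have := h.rk_additive _ (shortExact_cokernel m)
  dsimp at this
  omega

lemma isIso_of_mono_of_rk_eq {A B : D} (m : A ⟶ B) [Mono m] (hrk : h.rk A = h.rk B) :
    IsIso m := by
  have hadd := h.rk_additive _ (shortExact_cokernel m)
  dsimp at hadd
  have hQ : IsZero (cokernel m) := (h.rk_eq_zero_iff _).1 (by omega)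
  have : Epi m := Abelian.epi_of_cokernel_π_eq_zero _ (hQ.eq_zero_of_tgt _)
  exact isIso_of_mono_of_epi m

lemma muLE_of_isIso_map {A Y Z : C} (f : Y ⟶ Z) [IsIso (F.map f)] (hAY : h.muLE A Y) :
    h.muLE A Z := by
  have hrk : h.rkC Y = h.rkC Z := h.rk_iso (asIso (F.map f))
  unfold muLE at *
  rw [← hrk]
  exact hAY.trans (nsmul_le_nsmul_right (h.deg_le_of_FIso f inferInstance) _)

-- `ker (F.map m)` is the image of a strict subobject `A`, and `A.arrow ≫ m = 0` forces `A = 0`.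
lemma mono_map (h : HNTheory C D F V) {Y Z : C} (m : Y ⟶ Z) [Mono m] : Mono (F.map m) := by
  obtain ⟨A, -, hA⟩ := h.exists_strictSub_FSub_eq (kernelSubobject (F.map m))
  unfold FSub at hA
  have hAm : A.arrow ≫ m = 0 :=
    F.map_injective (by rw [F.map_comp, comp_eq_zero_of_imageSubobject_le hA.le, F.map_zero])
  have hker : kernelSubobject (F.map m) = ⊥ := by
    have hA0 : F.map A.arrow = 0 := by
      rw [(cancel_mono m).1 (hAm.trans zero_comp.symm), F.map_zero]
    simp only [← hA, hA0, imageSubobject_zero]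
  refine Preadditive.mono_of_cancel_zero _ fun g hg => ?_
  rw [← factorThruKernelSubobject_comp_arrow _ g hg,
    ← Subobject.ofLE_arrow hker.le, Subobject.bot_arrow, comp_zero, comp_zero]

end Basic

section Subobjects

variable {X : C}

lemma FSub_le_FSub_iff {S T : Subobject X} :
    h.FSub S ≤ h.FSub T ↔ ∃ l : F.obj S ⟶ F.obj T, l ≫ F.map T.arrow = F.map S.arrow := by
  have := h.mono_map S.arrow
  have := h.mono_map T.arrow
  simp only [FSub, imageSubobject_mono]
  exact ⟨fun hle => ⟨Subobject.ofMkLEMk _ _ hle, Subobject.ofMkLEMk_comp hle⟩,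
    fun ⟨l, hl⟩ => Subobject.mk_le_mk_of_comm l hl⟩

lemma FSub_mk {Y : C} (f : Y ⟶ X) [Mono f] :
    h.FSub (Subobject.mk f) = imageSubobject (F.map f) := by
  have := imageSubobject_iso_comp (F.map (Subobject.underlyingIso f).hom) (F.map f)
  simpa only [FSub, ← F.map_comp, Subobject.underlyingIso_hom_comp_eq_mk] using this

lemma FSub_mono {S T : Subobject X} (hST : S ≤ T) : h.FSub S ≤ h.FSub T :=
  (h.FSub_le_FSub_iff).2
    ⟨F.map (Subobject.ofLE S T hST), by rw [← F.map_comp, Subobject.ofLE_arrow]⟩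

lemma le_of_FSub_le {S T : Subobject X} (hT : h.StrictSub T) (hST : h.FSub S ≤ h.FSub T) :
    S ≤ T := by
  obtain ⟨Z, g, hTg⟩ := hT
  obtain ⟨l, hl⟩ := (h.FSub_le_FSub_iff).1 hST
  have hSg : S.arrow ≫ g = 0 := F.map_injective <| by
    rw [F.map_comp, ← hl, Category.assoc, ← F.map_comp, h.sse_comp_zero _ _ hTg, F.map_zero,
      comp_zero, F.map_zero]
  obtain ⟨k, hk⟩ := KernelFork.IsLimit.lift' (h.sse_isKernel _ _ hTg).some S.arrow hSg
  exact Subobject.le_of_comm k hk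

lemma isIso_map_ofLE {S T : Subobject X} (hST : S ≤ T) (hTS : h.FSub T ≤ h.FSub S) :
    IsIso (F.map (Subobject.ofLE S T hST)) := by
  have := h.mono_map S.arrow
  have := h.mono_map T.arrow
  exact isIso_of_comp_eq_of_imageSubobject_le _
    (by rw [← F.map_comp, Subobject.ofLE_arrow]) hTS

lemma le_of_isIso_map_ofLE_of_muLE {M N : Subobject X} (hM : ¬ IsZero (M : C)) (hMN : M ≤ N)
    (hiso : IsIso (F.map (Subobject.ofLE M N hMN))) (hNM : h.muLE N M) : N ≤ M := by
  have hrk : h.rkC N = h.rkC M := (h.rk_iso (asIso (F.map (Subobject.ofLE M N hMN)))).symm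
  have : IsIso (Subobject.ofLE M N hMN) := (h.deg_eq_iff_of_FIso _ hiso).1 <|
    le_antisymm (h.deg_le_of_FIso _ hiso) (h.deg_le_of_muLE_of_rkC_eq (h.rkC_pos hM) hrk hNM)
  exact Subobject.le_of_comm (inv (Subobject.ofLE M N hMN))
    (by rw [IsIso.inv_comp_eq, Subobject.ofLE_arrow])

lemma exists_le_epi_map_desc (h : HNTheory C D F V) (S T : Subobject X) :
    ∃ U : Subobject X, S ≤ U ∧ T ≤ U ∧
      ∀ (W : Subobject X) (hSW : S ≤ W) (hTW : T ≤ W), W ≤ U →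
      Epi (F.map (biprod.desc (Subobject.ofLE S W hSW) (Subobject.ofLE T W hTW))) := by
  obtain ⟨U, hU, hFU⟩ :=
    h.exists_strictSub_FSub_eq (imageSubobject (F.map (biprod.desc S.arrow T.arrow)))
  have hle (R : Subobject X) (i : (R : C) ⟶ (S : C) ⊞ (T : C))
      (hi : i ≫ biprod.desc S.arrow T.arrow = R.arrow) : R ≤ U :=
    h.le_of_FSub_le hU
      ((imageSubobject_le_of_comp_eq (F.map i) (by rw [← F.map_comp, hi])).trans hFU.ge)
  refine ⟨U, hle S biprod.inl (biprod.inl_desc _ _), hle T biprod.inr (biprod.inr_desc _ _),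
    fun W hSW hTW hWU => ?_⟩
  have := h.mono_map W.arrow
  refine epi_of_imageSubobject_le_imageSubobject_comp _ (F.map W.arrow) ?_
  refine ((h.FSub_mono hWU).trans hFU.le).trans (imageSubobject_le_of_comp_eq (𝟙 _) ?_)
  rw [Category.id_comp, ← F.map_comp]
  congr 1
  ext <;> simp

end Subobjects

section Exchange

lemma exists_shortExact_map_of_mono {Y Z : C} (m : Y ⟶ Z) [Mono m] :
    ∃ (Q : C) (q : Z ⟶ Q) (w : m ≫ q = 0),
      (ShortComplex.mk (F.map m) (F.map q) (by rw [← F.map_comp, w, F.map_zero])).ShortExact ∧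
      h.deg Y + h.deg Q ≤ h.deg Z := by
  have := h.mono_map m
  obtain ⟨A, ⟨Q, q, hAq⟩, hA⟩ := h.exists_strictSub_FSub_eq (imageSubobject (F.map m))
  have := h.mono_map A.arrow
  unfold FSub at hA
  obtain ⟨l, hl⟩ : ∃ l, l ≫ F.map A.arrow = F.map m := by
    rw [imageSubobject_mono, imageSubobject_mono] at hA
    exact ⟨Subobject.ofMkLEMk _ _ hA.ge, Subobject.ofMkLEMk_comp hA.ge⟩
  have hmq : m ≫ q = 0 := F.map_injective <| by
    rw [F.map_comp, ← hl, Category.assoc, ← F.map_comp, h.sse_comp_zero _ _ hAq, F.map_zero,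
      comp_zero, F.map_zero]
  obtain ⟨φ, hφ⟩ : ∃ φ : Y ⟶ (A : C), φ ≫ A.arrow = m :=
    let ⟨φ, hφ⟩ := KernelFork.IsLimit.lift' (h.sse_isKernel _ _ hAq).some m hmq
    ⟨φ, hφ⟩
  have hφ : F.map φ ≫ F.map A.arrow = F.map m := by rw [← F.map_comp, hφ]
  have : IsIso (F.map φ) := isIso_of_comp_eq_of_imageSubobject_le _ hφ hA.le
  refine ⟨Q, q, hmq, ShortComplex.shortExact_of_iso ?_ (h.F_exact _ _ hAq), ?_⟩
  · exact ShortComplex.isoMk (asIso (F.map φ)).symm (Iso.refl _) (Iso.refl _)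
      (by simp [← hφ]) (by simp)
  rw [h.deg_additive _ _ hAq]
  exact add_le_add (h.deg_le_of_FIso φ inferInstance) le_rfl

lemma exists_shortExact_map_of_epi_map {Y Q : C} (g : Y ⟶ Q) [Epi (F.map g)] :
    ∃ (K : C) (k : K ⟶ Y) (w : k ≫ g = 0),
      (ShortComplex.mk (F.map k) (F.map g) (by rw [← F.map_comp, w, F.map_zero])).ShortExact ∧
      h.deg Y ≤ h.deg K + h.deg Q := by
  obtain ⟨W, ⟨R, r, hWr⟩, hW⟩ := h.exists_strictSub_FSub_eq (kernelSubobject (F.map g))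
  unfold FSub at hW
  have hWg : W.arrow ≫ g = 0 :=
    F.map_injective (by rw [F.map_comp, comp_eq_zero_of_imageSubobject_le hW.le, F.map_zero])
  have hexact : (ShortComplex.mk (F.map W.arrow) (F.map g)
      (by rw [← F.map_comp, hWg, F.map_zero])).ShortExact :=
    .mk' ((ShortComplex.exact_iff_image_eq_kernel _).2 hW) (h.mono_map _) ‹_›
  obtain ⟨φ, hφ⟩ : ∃ φ : R ⟶ Q, r ≫ φ = g :=
    let ⟨φ, hφ⟩ := CokernelCofork.IsColimit.desc' (h.sse_isCokernel _ _ hWr).some g hWg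
    ⟨φ, hφ⟩
  have hφ : F.map r ≫ F.map φ = F.map g := by rw [← F.map_comp, hφ]
  have hWr0 : F.map W.arrow ≫ F.map r = 0 := by
    rw [← F.map_comp, h.sse_comp_zero _ _ hWr, F.map_zero]
  have : Epi (F.map r) := (h.F_exact _ _ hWr).epi_g
  have : IsSplitMono (F.map φ) := IsSplitMono.mk' ⟨hexact.exact.desc (F.map r) hWr0, by
    rw [← cancel_epi (F.map r), reassoc_of% hφ, hexact.exact.g_desc, Category.comp_id]⟩
  have : Epi (F.map φ) := epi_of_epi_fac hφ
  have : IsIso (F.map φ) := isIso_of_mono_of_epi _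
  refine ⟨W, W.arrow, hWg, hexact, ?_⟩
  rw [h.deg_additive _ _ hWr]
  exact add_le_add le_rfl (h.deg_le_of_FIso φ inferInstance)

lemma exists_exchange {X : C} {S T U : Subobject X} (hSU : S ≤ U) (hTU : T ≤ U)
    (hspan : Epi (F.map (biprod.desc (Subobject.ofLE S U hSU) (Subobject.ofLE T U hTU)))) :
    ∃ W : Subobject X, W ≤ T ∧ h.FSub W ≤ h.FSub S ∧
      (∀ Z : Subobject X, Z ≤ S → Z ≤ T → h.FSub Z ≤ h.FSub W) ∧
      h.rkC (U : C) + h.rkC (W : C) = h.rkC (S : C) + h.rkC (T : C) ∧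
      h.deg (S : C) + h.deg (T : C) ≤ h.deg (U : C) + h.deg (W : C) := by
  obtain ⟨Q, q, hsq, hE₁, hdeg₁⟩ := h.exists_shortExact_map_of_mono (Subobject.ofLE S U hSU)
  have := hE₁.epi_g
  have := epi_map_comp_of_epi_map_desc (F := F) (Subobject.ofLE S U hSU)
    (Subobject.ofLE T U hTU) q hsq
  obtain ⟨K, k, hkq, hE₂, hdeg₂⟩ :=
    h.exists_shortExact_map_of_epi_map (Subobject.ofLE T U hTU ≫ q)
  have : Mono k := F.mono_of_mono_map hE₂.mono_f
  have := hE₁.mono_f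
  have := hE₂.mono_f
  refine ⟨Subobject.mk (k ≫ T.arrow), Subobject.mk_le_of_comm k rfl, ?_, fun Z hZS hZT => ?_,
    ?_, ?_⟩
  · obtain ⟨l, hl⟩ : ∃ l, l ≫ F.map (Subobject.ofLE S U hSU)
        = F.map (k ≫ Subobject.ofLE T U hTU) :=
      ⟨_, hE₁.exact.lift_f _ (by
        dsimp only
        rw [← F.map_comp, Category.assoc, hkq, F.map_zero])⟩
    rw [h.FSub_mk]
    refine imageSubobject_le_of_comp_eq l ?_
    rw [← Subobject.ofLE_arrow hSU, F.map_comp, reassoc_of% hl, ← F.map_comp, Category.assoc,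
      Subobject.ofLE_arrow]
  · obtain ⟨l, hl⟩ : ∃ l, l ≫ F.map k = F.map (Subobject.ofLE Z T hZT) :=
      ⟨_, hE₂.exact.lift_f _ (by
        dsimp only
        rw [← F.map_comp, Subobject.ofLE_comp_ofLE_assoc,
          ← Subobject.ofLE_comp_ofLE Z S U hZS hSU, Category.assoc, hsq, comp_zero,
          F.map_zero])⟩
    rw [h.FSub_mk]
    refine imageSubobject_le_of_comp_eq l ?_
    rw [F.map_comp, reassoc_of% hl, ← F.map_comp, Subobject.ofLE_arrow]
  · have hrkW : h.rkC (Subobject.mk (k ≫ T.arrow) : C) = h.rkC K :=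
      h.rk_iso (F.mapIso (Subobject.underlyingIso _))
    have hrk₁ : h.rkC (U : C) = h.rkC (S : C) + h.rkC Q := h.rk_additive _ hE₁
    have hrk₂ : h.rkC (T : C) = h.rkC K + h.rkC Q := h.rk_additive _ hE₂
    omega
  · rw [h.deg_iso (Subobject.underlyingIso _)]
    calc h.deg (S : C) + h.deg (T : C) ≤ h.deg (S : C) + (h.deg K + h.deg Q) :=
          add_le_add le_rfl hdeg₂
      _ = (h.deg (S : C) + h.deg Q) + h.deg K := by abel
      _ ≤ h.deg (U : C) + h.deg K := add_le_add hdeg₁ le_rfl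

end Exchange

section MaxSlope

variable {h} {X : C} {S T : Subobject X}

namespace MaxSlopeSub

lemma muLE (hS : h.MaxSlopeSub S) (T : Subobject X) : h.muLE (T : C) (S : C) := by
  by_cases hT : IsZero (T : C)
  · exact h.muLE_of_isZero _ hT
  · exact hS.2 T hT

lemma of_muLE (hS : h.MaxSlopeSub S) (hT : ¬ IsZero (T : C)) (hST : h.muLE (S : C) (T : C)) :
    h.MaxSlopeSub T :=
  ⟨hT, fun Z hZ => h.muLE_trans (h.rkC_pos hS.1) (hS.2 Z hZ) hST⟩

lemma strictSub (hS : h.MaxSlopeSub S) : h.StrictSub S := by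
  obtain ⟨S', hS', hFS'⟩ := h.exists_strictSub_FSub_eq (h.FSub S)
  have hle : S ≤ S' := h.le_of_FSub_le hS' hFS'.ge
  have hge : S' ≤ S := h.le_of_isIso_map_ofLE_of_muLE hS.1 hle (h.isIso_map_ofLE hle hFS'.le)
    (hS.muLE S')
  rwa [le_antisymm hle hge]

lemma of_epi_map_desc (hS : h.MaxSlopeSub S) (hT : h.MaxSlopeSub T) {U : Subobject X}
    (hSU : S ≤ U) (hTU : T ≤ U)
    (hspan : Epi (F.map (biprod.desc (Subobject.ofLE S U hSU) (Subobject.ofLE T U hTU)))) :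
    h.MaxSlopeSub U := by
  obtain ⟨W, -, -, -, hrk, hdeg⟩ := h.exists_exchange hSU hTU hspan
  exact hS.of_muLE (not_isZero_of_le hS.1 hSU) (h.muLE_sup_of_exchange hrk hdeg
    (hT.muLE S) (hS.muLE W))

lemma of_isGLB (hS : h.MaxSlopeSub S) (hT : h.MaxSlopeSub T) {U I : Subobject X}
    (hSU : S ≤ U) (hTU : T ≤ U)
    (hspan : Epi (F.map (biprod.desc (Subobject.ofLE S U hSU) (Subobject.ofLE T U hTU))))
    (hI : IsGLB {S, T} I) (hI0 : ¬ IsZero (I : C)) : h.MaxSlopeSub I := by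
  obtain ⟨W, hWT, hWS, hWinf, hrk, hdeg⟩ := h.exists_exchange hSU hTU hspan
  have hSW : h.muLE (S : C) (W : C) := h.muLE_inf_of_exchange hrk hdeg
    (hT.muLE S) (hS.muLE U)
  have hWI : W ≤ I := hI.2 (by
    rintro Z (rfl | rfl)
    exacts [h.le_of_FSub_le hS.strictSub hWS, hWT])
  have hIS : I ≤ S := hI.1 (by simp)
  have hIT : I ≤ T := hI.1 (by simp)
  have := h.isIso_map_ofLE hWI (hWinf I hIS hIT)
  exact hS.of_muLE hI0 (h.muLE_of_isIso_map (Subobject.ofLE W I hWI) hSW)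

end MaxSlopeSub

lemma exists_greatest_maxSlopeSub (hne : ∃ S : Subobject X, h.MaxSlopeSub S) :
    ∃ M : Subobject X, h.MaxSlopeSub M ∧ ∀ S : Subobject X, h.MaxSlopeSub S → S ≤ M := by
  have hbdd : BddAbove ((fun M : Subobject X => h.rkC (M : C)) '' {M | h.MaxSlopeSub M}) := by
    refine ⟨h.rk (F.obj X), ?_⟩
    rintro _ ⟨M, -, rfl⟩
    have := h.mono_map M.arrow
    exact h.rk_le_of_mono (F.map M.arrow)
  obtain ⟨_, ⟨M, hM, rfl⟩, hmax⟩ :=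
    hbdd.exists_isGreatest_of_nonempty (Set.Nonempty.image _ hne)
  refine ⟨M, hM, fun S hS => ?_⟩
  obtain ⟨U, hSU, hMU, hspan⟩ := h.exists_le_epi_map_desc S M
  have hU := hS.of_epi_map_desc hM hSU hMU (hspan U hSU hMU le_rfl)
  have := h.mono_map (Subobject.ofLE M U hMU)
  have hiso := h.isIso_of_mono_of_rk_eq (F.map (Subobject.ofLE M U hMU))
    (le_antisymm (h.rk_le_of_mono (F.map (Subobject.ofLE M U hMU))) (hmax ⟨U, hU, rfl⟩))
  exact hSU.trans (h.le_of_isIso_map_ofLE_of_muLE hM.1 hMU hiso (hM.muLE U))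

end MaxSlope

end HNTheory

/-- (5.2) If `S`, `T` are subobjects of `X` of maximal slope, then `S + T` is
of maximal slope, and `S ∩ T` is of maximal slope if nonzero; consequently,
if `X` admits a subobject of maximal slope, it admits a unique final one. -/
theorem stmt15 (h : HNTheory C D F V) {X : C} (S T U I : Subobject X)
    (hS : h.MaxSlopeSub S) (hT : h.MaxSlopeSub T)
    (hU : IsLUB {S, T} U) (hI : IsGLB {S, T} I) :
    h.MaxSlopeSub U ∧ (¬ IsZero ((I : C)) → h.MaxSlopeSub I) ∧
    ((∃ S' : Subobject X, h.MaxSlopeSub S') →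
      ∃! M : Subobject X, h.MaxSlopeSub M ∧
        ∀ S' : Subobject X, h.MaxSlopeSub S' → S' ≤ M) := by
  obtain ⟨Ut, hSUt, hTUt, hspan⟩ := h.exists_le_epi_map_desc S T
  have hSU : S ≤ U := hU.1 (by simp)
  have hTU : T ≤ U := hU.1 (by simp)
  have hspanU := hspan U hSU hTU (hU.2 (by rintro Z (rfl | rfl) <;> assumption))
  refine ⟨hS.of_epi_map_desc hT hSU hTU hspanU, hS.of_isGLB hT hSU hTU hspanU hI, fun hne => ?_⟩
  obtain ⟨M, hM, hgreatest⟩ := h.exists_greatest_maxSlopeSub hne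
  exact ⟨M, ⟨hM, hgreatest⟩, fun M' hM' => le_antisymm (hgreatest M' hM'.1) (hM'.2 M hM)⟩
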